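/- arXiv:2410.17104 — 2 statements merged into one kernel-verified Lean document; each statement's English description precedes it below -/
import Mathlib

section
/- Let ι be a countable index set, λ : ι → ℝ with λ i ≥ 1 for all i and {i : λ i ≤ T} finite for every T, w : ι → ℝ with w i ≥ 0 for all i, and q ∈ ℕ. If limsup_{T→∞} (1/T)·log(∑_{i : λ i ≤ T} (λ i)^q · w i) = β for some real β with 0 < β < ∞, then limsup_{T→∞} (1/T)·log(∑_{i : T < λ i ≤ T+1} w i) = β. -/
open Filter

/-- Extended-real logarithm: `log 0` (and of anything nonpositive) is `-∞`. -/
noncomputable def elog (x : ℝ) : EReal := if x ≤ 0 then ⊥ else ((Real.log x : ℝ) : EReal)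

/-- The window `{i | T < λ i ≤ T + 1}` is finite, given that all cumulative sets
`{i | λ i ≤ T}` are finite. -/
theorem windowFinite {ι : Type*} (l : ι → ℝ) (hfin : ∀ T : ℝ, {i | l i ≤ T}.Finite)
    (T : ℝ) : {i | T < l i ∧ l i ≤ T + 1}.Finite :=
  (hfin (T + 1)).subset (fun _ hi => hi.2)

/-!
Write `S T = ∑_{λ i ≤ T} (λ i)^q w i` and `W T = ∑_{T < λ i ≤ T+1} w i`. Since `λ ≥ 1`, the window
at `T` lies in the cumulative set at `T + 1`, so `W T ≤ S (T + 1)` and `W` grows no faster than `S`.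
Conversely, cutting `{λ i ≤ T}` into the windows at `0, 1, …, ⌈T⌉ - 1` gives
`S T ≤ T^q ∑_{n < ⌈T⌉} W n`; if `W` grew at a rate `c < β` (with `c > 0`), this sum would be
at most a polynomial in `T` times `exp (c T)`, so `S` would grow at rate at most `c`.
-/

open Real

noncomputable def expGrowthRate (f : ℝ → ℝ) : EReal :=
  limsup (fun T : ℝ => ((1 / T : ℝ) : EReal) * elog (f T)) atTop

lemma coe_one_div_mul_elog_le_coe_iff {T x b : ℝ} (hT : 0 < T) :
    ((1 / T : ℝ) : EReal) * elog x ≤ (b : EReal) ↔ x ≤ exp (b * T) := by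
  unfold elog
  split_ifs with hx
  · simp only [EReal.coe_mul_bot_of_pos (one_div_pos.mpr hT), bot_le, true_iff]
    exact hx.trans (exp_pos _).le
  · rw [← EReal.coe_mul, EReal.coe_le_coe_iff, one_div_mul_eq_div, div_le_iff₀ hT,
      log_le_iff_le_exp (not_le.mp hx)]

section ExpGrowthRate

variable {f g : ℝ → ℝ}

lemma expGrowthRate_le_of_eventually_le_exp {b : ℝ} (h : ∀ᶠ T in atTop, f T ≤ exp (b * T)) :
    expGrowthRate f ≤ b := by
  refine limsup_le_of_le (by isBoundedDefault) ?_
  filter_upwards [h, eventually_gt_atTop 0] with T hfT hT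
  exact (coe_one_div_mul_elog_le_coe_iff hT).mpr hfT

lemma eventually_le_exp_of_expGrowthRate_lt {b : ℝ} (h : expGrowthRate f < b) :
    ∀ᶠ T in atTop, f T ≤ exp (b * T) := by
  filter_upwards [eventually_lt_of_limsup_lt h, eventually_gt_atTop 0] with T hfT hT
  exact (coe_one_div_mul_elog_le_coe_iff hT).mp hfT.le

lemma expGrowthRate_le_of_forall_lt {c : EReal}
    (h : ∀ b : ℝ, c < b → ∀ᶠ T in atTop, f T ≤ exp (b * T)) : expGrowthRate f ≤ c := by
  by_contra! hc
  obtain ⟨b, hcb, hbf⟩ := EReal.exists_between_coe_real hc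
  exact (expGrowthRate_le_of_eventually_le_exp (h b hcb)).not_gt hbf

lemma expGrowthRate_le_of_le_comp_add_one (h : ∀ T, g T ≤ f (T + 1)) :
    expGrowthRate g ≤ expGrowthRate f := by
  refine expGrowthRate_le_of_forall_lt fun b hb => ?_
  obtain ⟨b', hfb', hb'b⟩ := EReal.exists_between_coe_real hb
  have hb'b : b' < b := by exact_mod_cast hb'b
  have hf : ∀ᶠ T in atTop, f (T + 1) ≤ exp (b' * (T + 1)) :=
    (tendsto_atTop_add_const_right atTop 1 tendsto_id).eventually
      (eventually_le_exp_of_expGrowthRate_lt hfb')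
  filter_upwards [hf, eventually_ge_atTop (b' / (b - b'))] with T hfT hT
  have : b' ≤ (b - b') * T := by rwa [div_le_iff₀' (sub_pos.mpr hb'b)] at hT
  exact (h T).trans (hfT.trans (exp_le_exp.mpr (by linarith)))

end ExpGrowthRate

lemma exists_forall_le_add_of_eventually_le {u v : ℕ → ℝ} (h : ∀ᶠ n in atTop, u n ≤ v n) :
    ∃ C, 0 ≤ C ∧ ∀ n, u n ≤ C + v n := by
  obtain ⟨N, hN⟩ := eventually_atTop.mp h
  set C := ∑ m ∈ Finset.range N, |u m - v m|
  have hC : 0 ≤ C := by positivity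
  refine ⟨C, hC, fun n => ?_⟩
  rcases lt_or_ge n N with hn | hn
  · have := Finset.single_le_sum (fun m _ => abs_nonneg (u m - v m)) (Finset.mem_range.mpr hn)
    linarith [le_abs_self (u n - v n)]
  · linarith [hN n hn]

lemma eventually_mul_pow_mul_exp_le_exp (K : ℝ) (k : ℕ) {c b : ℝ} (hcb : c < b) :
    ∀ᶠ T in atTop, K * T ^ k * exp (c * T) ≤ exp (b * T) := by
  filter_upwards [((isLittleO_pow_exp_pos_mul_atTop k (sub_pos.mpr hcb)).const_mul_left K).bound
    one_pos] with T hT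
  have hK : K * T ^ k ≤ exp ((b - c) * T) := by
    simpa [Real.norm_eq_abs, abs_of_pos (exp_pos _)] using (le_abs_self _).trans hT
  calc K * T ^ k * exp (c * T) ≤ exp ((b - c) * T) * exp (c * T) := by gcongr
    _ = exp (b * T) := by rw [← exp_add]; ring_nf

lemma expGrowthRate_le_max_of_le_pow_mul_sum {f g : ℝ → ℝ} (q : ℕ)
    (h : ∀ T, 0 ≤ T → f T ≤ T ^ q * ∑ n ∈ Finset.range ⌈T⌉₊, g n) :
    expGrowthRate f ≤ max (expGrowthRate g) 0 := by
  refine expGrowthRate_le_of_forall_lt fun b hb => ?_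
  obtain ⟨c, hgc, hcb⟩ := EReal.exists_between_coe_real hb
  have hc : 0 < c := by exact_mod_cast (le_max_right _ _).trans_lt hgc
  have hcb : c < b := by exact_mod_cast hcb
  obtain ⟨C, hC, hgC⟩ := exists_forall_le_add_of_eventually_le (v := fun n => exp (c * n))
    (tendsto_natCast_atTop_atTop.eventually
      (eventually_le_exp_of_expGrowthRate_lt ((le_max_left _ _).trans_lt hgc)))
  filter_upwards [eventually_mul_pow_mul_exp_le_exp (2 * (C + 1)) (q + 1) hcb,
    eventually_ge_atTop 1] with T hT hT1
  have hT0 : 0 ≤ T := zero_le_one.trans hT1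
  have hsum : ∑ n ∈ Finset.range ⌈T⌉₊, g n ≤ ⌈T⌉₊ * (C + exp (c * T)) :=
    calc ∑ n ∈ Finset.range ⌈T⌉₊, g n ≤ ∑ _n ∈ Finset.range ⌈T⌉₊, (C + exp (c * T)) := by
          refine Finset.sum_le_sum fun n hn => (hgC n).trans ?_
          gcongr
          exact (Nat.lt_ceil.mp (Finset.mem_range.mp hn)).le
      _ = ⌈T⌉₊ * (C + exp (c * T)) := by rw [Finset.sum_const, Finset.card_range, nsmul_eq_mul]
  have hexp : 1 ≤ exp (c * T) := one_le_exp (by positivity)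
  calc f T ≤ T ^ q * (⌈T⌉₊ * (C + exp (c * T))) := (h T hT0).trans (by gcongr)
    _ ≤ T ^ q * ((T + 1) * ((C + 1) * exp (c * T))) := by
        gcongr
        · exact (Nat.ceil_lt_add_one hT0).le
        · nlinarith
    _ ≤ T ^ q * ((2 * T) * ((C + 1) * exp (c * T))) := by gcongr; linarith
    _ = 2 * (C + 1) * T ^ (q + 1) * exp (c * T) := by ring
    _ ≤ exp (b * T) := hT

lemma mem_Ioc_ceil_sub_one {x : ℝ} (hx : 0 < x) :
    x ∈ Set.Ioc ((⌈x⌉₊ - 1 : ℕ) : ℝ) ((⌈x⌉₊ - 1 : ℕ) + 1) := by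
  have hceil : ⌈x⌉₊ ≠ 0 := (Nat.ceil_pos.mpr hx).ne'
  obtain ⟨hlt, hle⟩ := (Nat.ceil_eq_iff hceil).mp rfl
  refine ⟨hlt, ?_⟩
  rwa [Nat.cast_sub (Nat.one_le_iff_ne_zero.mpr hceil), Nat.cast_one, sub_add_cancel]

section WindowSums

variable {ι : Type*} (l w : ι → ℝ) (q : ℕ) (hfin : ∀ T : ℝ, {i | l i ≤ T}.Finite)

noncomputable def cumulativeSum (T : ℝ) : ℝ := ∑ i ∈ (hfin T).toFinset, l i ^ q * w i

noncomputable def windowSum (T : ℝ) : ℝ := ∑ i ∈ (windowFinite l hfin T).toFinset, w i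

variable {l w q hfin}

lemma windowSum_le_cumulativeSum_add_one (hl : ∀ i, 1 ≤ l i) (hw : ∀ i, 0 ≤ w i) (T : ℝ) :
    windowSum l w hfin T ≤ cumulativeSum l w q hfin (T + 1) := by
  calc windowSum l w hfin T ≤ ∑ i ∈ (windowFinite l hfin T).toFinset, l i ^ q * w i :=
        Finset.sum_le_sum fun i _ => le_mul_of_one_le_left (hw i) (one_le_pow₀ (hl i))
    _ ≤ cumulativeSum l w q hfin (T + 1) :=
        Finset.sum_le_sum_of_subset_of_nonneg
          (fun i hi => by simp_all only [Set.Finite.mem_toFinset, Set.mem_ofPred_eq])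
          fun i _ _ => mul_nonneg (pow_nonneg (zero_le_one.trans (hl i)) q) (hw i)

lemma cumulativeSum_le_pow_mul_sum_windowSum (hl : ∀ i, 1 ≤ l i) (hw : ∀ i, 0 ≤ w i)
    {T : ℝ} (hT : 0 ≤ T) :
    cumulativeSum l w q hfin T ≤ T ^ q * ∑ n ∈ Finset.range ⌈T⌉₊, windowSum l w hfin n := by
  classical
  have hmaps : ∀ i ∈ (hfin T).toFinset, ⌈l i⌉₊ - 1 ∈ Finset.range ⌈T⌉₊ := fun i hi => by
    have hi : l i ≤ T := by simpa using hi
    have := Nat.ceil_le_ceil hi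
    have := Nat.ceil_pos.mpr (zero_lt_one.trans_le (hl i))
    rw [Finset.mem_range]
    omega
  have hfiber : ∀ n, ∑ i ∈ (hfin T).toFinset with ⌈l i⌉₊ - 1 = n, w i ≤ windowSum l w hfin n :=
    fun n => Finset.sum_le_sum_of_subset_of_nonneg (fun i hi => by
        obtain ⟨-, rfl⟩ := Finset.mem_filter.mp hi
        simpa using mem_Ioc_ceil_sub_one (zero_lt_one.trans_le (hl i)))
      fun i _ _ => hw i
  calc cumulativeSum l w q hfin T ≤ ∑ i ∈ (hfin T).toFinset, T ^ q * w i :=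
        Finset.sum_le_sum fun i hi => by
          have hi : l i ≤ T := by simpa using hi
          gcongr
          · exact hw i
          · exact zero_le_one.trans (hl i)
    _ = T ^ q * ∑ n ∈ Finset.range ⌈T⌉₊, ∑ i ∈ (hfin T).toFinset with ⌈l i⌉₊ - 1 = n, w i := by
        rw [← Finset.mul_sum, Finset.sum_fiberwise_of_maps_to hmaps]
    _ ≤ T ^ q * ∑ n ∈ Finset.range ⌈T⌉₊, windowSum l w hfin n := by
        gcongr with n
        exact hfiber n

end WindowSums

theorem abstract_growth_rate_general {ι : Type*} (l : ι → ℝ) (w : ι → ℝ) (q : ℕ)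
    (hl : ∀ i, 1 ≤ l i) (hfin : ∀ T : ℝ, {i | l i ≤ T}.Finite)
    (hw : ∀ i, 0 ≤ w i) (β : ℝ) (hβ : 0 < β)
    (hlim : limsup (fun T : ℝ =>
        ((1 / T : ℝ) : EReal) * elog (∑ i ∈ (hfin T).toFinset, (l i) ^ q * w i)) atTop
        = (β : EReal)) :
    limsup (fun T : ℝ =>
        ((1 / T : ℝ) : EReal) * elog (∑ i ∈ (windowFinite l hfin T).toFinset, w i)) atTop
      = (β : EReal) := by
  change expGrowthRate (cumulativeSum l w q hfin) = β at hlim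
  change expGrowthRate (windowSum l w hfin) = β
  have hupper := expGrowthRate_le_of_le_comp_add_one
    (windowSum_le_cumulativeSum_add_one (q := q) (hfin := hfin) hl hw)
  have hlower := expGrowthRate_le_max_of_le_pow_mul_sum q
    fun _ hT => cumulativeSum_le_pow_mul_sum_windowSum (hfin := hfin) hl hw hT
  rw [hlim] at hupper hlower
  refine le_antisymm hupper ((le_max_iff.mp hlower).resolve_right ?_)
  exact_mod_cast hβ.not_ge

/-- If the cumulative sums `∑_{λ i ≤ T} (λ i)^q · w i` have exponential growth rate
`β ∈ (0, ∞)`, then the window sums `∑_{T < λ i ≤ T+1} w i` have the same exponential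
growth rate `β`. -/
theorem abstract_growth_rate {ι : Type*} [Countable ι] (l : ι → ℝ) (w : ι → ℝ) (q : ℕ)
    (hl : ∀ i, 1 ≤ l i) (hfin : ∀ T : ℝ, {i | l i ≤ T}.Finite)
    (hw : ∀ i, 0 ≤ w i) (β : ℝ) (hβ : 0 < β)
    (hlim : limsup (fun T : ℝ =>
        ((1 / T : ℝ) : EReal) * elog (∑ i ∈ (hfin T).toFinset, (l i) ^ q * w i)) atTop
        = (β : EReal)) :
    limsup (fun T : ℝ =>
        ((1 / T : ℝ) : EReal) * elog (∑ i ∈ (windowFinite l hfin T).toFinset, w i)) atTop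
      = (β : EReal) :=
  abstract_growth_rate_general l w q hl hfin hw β hβ hlim
end

section
/- Let ι be a countable index set, λ : ι → ℝ with λ i ≥ 0 for all i and {i : λ i ≤ T} finite for every T, w : ι → ℝ with w i ≥ 0 for all i, and c ∈ ℝ. Then, as elements of the extended reals, limsup_{T→∞} (1/T)·log(∑_{i : T < λ i ≤ T+1} e^{c·λ i} · w i) = c + limsup_{T→∞} (1/T)·log(∑_{i : T < λ i ≤ T+1} w i); that is, tilting the weights by the exponential factor e^{c·λ i} shifts the exponential growth rate of the window sums by exactly c. -/
open Filter

/-!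
On the window `T < λ i ≤ T + 1` the tilting factor satisfies
`e^{c λ i} ≤ e^{c T + |c|}`, so the tilted window sum is at most `e^{c T + |c|}` times the
untilted one; after taking `(1/T) log` the constant `|c|/T` disappears in the limsup, giving
`≤`. Tilting the tilted weights back by `-c` gives the reverse inequality.
-/

open Topology

lemma elog_le_elog {x y : ℝ} (h : x ≤ y) : elog x ≤ elog y := by
  unfold elog
  split_ifs with hx hy hy
  · exact le_rfl
  · exact bot_le
  · exact absurd (h.trans hy) hx
  · exact_mod_cast Real.log_le_log (not_le.1 hx) h

lemma elog_exp_mul (a y : ℝ) : elog (Real.exp a * y) = (a : EReal) + elog y := by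
  unfold elog
  by_cases hy : y ≤ 0
  · rw [if_pos hy, if_pos (mul_nonpos_of_nonneg_of_nonpos (Real.exp_pos a).le hy),
      EReal.add_bot]
  · have hpos : 0 < Real.exp a * y := mul_pos (Real.exp_pos a) (not_le.1 hy)
    rw [if_neg hy, if_neg hpos.not_ge, Real.log_mul (Real.exp_ne_zero a) (by linarith),
      Real.log_exp, EReal.coe_add]

noncomputable def growthRate (f : ℝ → ℝ) : EReal :=
  limsup (fun T : ℝ => ((1 / T : ℝ) : EReal) * elog (f T)) atTop

lemma inv_mul_elog_le_of_le_exp_mul {x y c K T : ℝ} (hT : 0 < T)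
    (h : x ≤ Real.exp (c * T + K) * y) :
    ((1 / T : ℝ) : EReal) * elog x ≤
      ((c + K / T : ℝ) : EReal) + ((1 / T : ℝ) : EReal) * elog y := by
  have hT' : (0 : EReal) ≤ ((1 / T : ℝ) : EReal) := by exact_mod_cast (one_div_pos.2 hT).le
  calc ((1 / T : ℝ) : EReal) * elog x
      ≤ ((1 / T : ℝ) : EReal) * (((c * T + K : ℝ) : EReal) + elog y) := by
        rw [← elog_exp_mul]
        exact mul_le_mul_of_nonneg_left (elog_le_elog h) hT'
    _ = ((c + K / T : ℝ) : EReal) + ((1 / T : ℝ) : EReal) * elog y := by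
        rw [EReal.left_distrib_of_nonneg_of_ne_top hT' (EReal.coe_ne_top _), ← EReal.coe_mul]
        congr 3
        field_simp

theorem growthRate_le_add_of_le_exp_mul {f g : ℝ → ℝ} {c K : ℝ}
    (hgf : ∀ᶠ T in atTop, g T ≤ Real.exp (c * T + K) * f T) :
    growthRate g ≤ c + growthRate f := by
  have hshift : Tendsto (fun T : ℝ => ((c + K / T : ℝ) : EReal)) atTop (𝓝 c) := by
    have hK : Tendsto (fun T : ℝ => K / T) atTop (𝓝 0) :=
      tendsto_const_nhds.div_atTop tendsto_id
    simpa using EReal.tendsto_coe.2 ((tendsto_const_nhds (x := c)).add hK)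
  have hpointwise : ∀ᶠ T in atTop, ((1 / T : ℝ) : EReal) * elog (g T) ≤
      ((c + K / T : ℝ) : EReal) + ((1 / T : ℝ) : EReal) * elog (f T) := by
    filter_upwards [hgf, eventually_gt_atTop 0] with T hT hT0
    exact inv_mul_elog_le_of_le_exp_mul hT0 hT
  refine EReal.le_add_of_forall_gt (.inl (EReal.coe_ne_bot c)) (.inl (EReal.coe_ne_top c))
    fun a ha b hb => (limsup_le_limsup hpointwise).trans ?_
  exact EReal.limsup_add_le_of_le (hshift.limsup_eq ▸ ha) hb.le

lemma sum_exp_mul_le_exp_mul_sum {ι : Type*} {s : Finset ι} {l w : ι → ℝ} {T : ℝ} (c : ℝ)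
    (hs : ∀ i ∈ s, T < l i ∧ l i ≤ T + 1) (hw : ∀ i ∈ s, 0 ≤ w i) :
    ∑ i ∈ s, Real.exp (c * l i) * w i ≤ Real.exp (c * T + |c|) * ∑ i ∈ s, w i := by
  rw [Finset.mul_sum]
  refine Finset.sum_le_sum fun i hi => mul_le_mul_of_nonneg_right ?_ (hw i hi)
  have hdist : |l i - T| ≤ 1 := abs_le.2 ⟨by linarith [hs i hi], by linarith [hs i hi]⟩
  have : c * (l i - T) ≤ |c| :=
    calc c * (l i - T) ≤ |c| * |l i - T| := (le_abs_self _).trans (abs_mul _ _).le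
      _ ≤ |c| := mul_le_of_le_one_right (abs_nonneg c) hdist
  exact Real.exp_le_exp.2 (by linarith)

theorem exponential_tilting_shifts_growth_rate_general {ι : Type*}
    (l : ι → ℝ) (w : ι → ℝ) (c : ℝ)
    (hfin : ∀ T : ℝ, {i | l i ≤ T}.Finite)
    (hw : ∀ i, 0 ≤ w i) :
    limsup (fun T : ℝ =>
        ((1 / T : ℝ) : EReal) *
          elog (∑ i ∈ (windowFinite l hfin T).toFinset, Real.exp (c * l i) * w i)) atTop
      = (c : EReal) + limsup (fun T : ℝ =>
          ((1 / T : ℝ) : EReal) *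
            elog (∑ i ∈ (windowFinite l hfin T).toFinset, w i)) atTop := by
  have hwindow (T : ℝ) : ∀ i ∈ (windowFinite l hfin T).toFinset, T < l i ∧ l i ≤ T + 1 :=
    fun i hi => by simpa using hi
  have htilt (T : ℝ) := sum_exp_mul_le_exp_mul_sum c (hwindow T) (fun i _ => hw i)
  have huntilt (T : ℝ) := sum_exp_mul_le_exp_mul_sum (-c) (hwindow T)
    (fun i _ => mul_nonneg (Real.exp_pos (c * l i)).le (hw i))
  have hcancel (i : ι) : Real.exp (-c * l i) * (Real.exp (c * l i) * w i) = w i := by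
    rw [← mul_assoc, ← Real.exp_add, neg_mul, neg_add_cancel, Real.exp_zero, one_mul]
  simp only [hcancel, abs_neg] at huntilt
  change growthRate _ = c + growthRate _
  refine le_antisymm (growthRate_le_add_of_le_exp_mul (.of_forall htilt)) ?_
  calc (c : EReal) + growthRate _
      ≤ c + (((-c : ℝ) : EReal) + growthRate _) :=
        add_le_add le_rfl (growthRate_le_add_of_le_exp_mul (.of_forall huntilt))
    _ = growthRate _ := by
        rw [← add_assoc, ← EReal.coe_add, add_neg_cancel, EReal.coe_zero, zero_add]

/-- Tilting the weights by the exponential factor `e^{c·λ i}` shifts the exponential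
growth rate of the window sums `∑_{T < λ i ≤ T+1} w i` by exactly `c` (in the extended
reals, where `c + (±∞) = ±∞`). -/
theorem exponential_tilting_shifts_growth_rate {ι : Type*} [Countable ι]
    (l : ι → ℝ) (w : ι → ℝ) (c : ℝ)
    (hl : ∀ i, 0 ≤ l i) (hfin : ∀ T : ℝ, {i | l i ≤ T}.Finite)
    (hw : ∀ i, 0 ≤ w i) :
    limsup (fun T : ℝ =>
        ((1 / T : ℝ) : EReal) *
          elog (∑ i ∈ (windowFinite l hfin T).toFinset, Real.exp (c * l i) * w i)) atTop
      = (c : EReal) + limsup (fun T : ℝ =>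
          ((1 / T : ℝ) : EReal) *
            elog (∑ i ∈ (windowFinite l hfin T).toFinset, w i)) atTop :=
  exponential_tilting_shifts_growth_rate_general l w c hfin hw
end
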